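/- arXiv:1010.3909 — 5 statements merged into one kernel-verified Lean document; each statement's English description precedes it below -/
import Mathlib

section
/- Let d ≥ 1, let A : ℝ → Matrix (Fin d) (Fin d) ℝ be continuous with A(t) lower triangular (Aᵢⱼ(t) = 0 for j > i) and with unit diagonal (Aᵢᵢ(t) = 1) for all t, and let ξ : ℝ → Fin d → ℝ be differentiable with ξᵢ'(t) = Σ_{j ≤ i} Aᵢⱼ(t)·ξⱼ(t) for all i and t, and with ξ₀(0) ≠ 0 (components indexed from 0). Then ξ₀(t) = ξ₀(0)·exp(t) for all t, and for every index i ≥ 1 and all t, ξᵢ(t) = ξ₀(t)·( ξᵢ(0)/ξ₀(0) + ∫₀ᵗ Σ_{j < i} Aᵢⱼ(s)·ξⱼ(s)/ξ₀(s) ds ). Hence every component of ξ is obtained from the entries of A by iterated quadratures (integrals and exponentials of integrals). -/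
/-!
Write `gᵢ(s) = ∑_{j < i} Aᵢⱼ(s) ξⱼ(s)`. Because the diagonal of `A` is `1`, each component solves
the scalar equation `ξᵢ' = ξᵢ + gᵢ`, whose solution is given by variation of constants:
`ξᵢ(t) = eᵗ (ξᵢ(0) + ∫₀ᵗ e⁻ˢ gᵢ(s) ds)`. For `i = 0` the forcing `g₀` is an empty sum, so
`ξ₀(t) = ξ₀(0) eᵗ`, and substituting `e⁻ˢ = ξ₀(0) / ξ₀(s)` gives the stated formula for `i ≥ 1`.
-/

open Real intervalIntegral

theorem eq_exp_mul_add_integral_of_hasDerivAt_self_add {f g : ℝ → ℝ} (hg : Continuous g)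
    (hf : ∀ t, HasDerivAt f (f t + g t) t) (t : ℝ) :
    f t = exp t * (f 0 + ∫ s in (0 : ℝ)..t, exp (-s) * g s) := by
  have hderiv : ∀ s, HasDerivAt (fun s => exp (-s) * f s) (exp (-s) * g s) s := fun s =>
    ((hasDerivAt_neg s).exp.mul (hf s)).congr_deriv (by ring)
  have hint : IntervalIntegrable (fun s => exp (-s) * g s) MeasureTheory.volume 0 t :=
    (by fun_prop : Continuous fun s => exp (-s) * g s).intervalIntegrable _ _
  rw [integral_eq_sub_of_hasDerivAt (fun s _ => hderiv s) hint, neg_zero, exp_zero, one_mul,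
    add_sub_cancel, ← mul_assoc, ← exp_add, add_neg_cancel, exp_zero, one_mul]

theorem stmt_4_general (d : ℕ) (hd : 0 < d) (A : ℝ → Matrix (Fin d) (Fin d) ℝ)
    (hA : Continuous A)
    (hdiag : ∀ t (i : Fin d), A t i i = 1)
    (ξ : ℝ → Fin d → ℝ)
    (hξ : ∀ i : Fin d, Differentiable ℝ (fun t => ξ t i))
    (hode : ∀ (i : Fin d) (t : ℝ),
      deriv (fun t => ξ t i) t = ∑ j ∈ Finset.Iic i, A t i j * ξ t j)
    (h0 : ξ 0 ⟨0, hd⟩ ≠ 0) :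
    (∀ t, ξ t ⟨0, hd⟩ = ξ 0 ⟨0, hd⟩ * Real.exp t) ∧
    (∀ i : Fin d, 1 ≤ (i : ℕ) → ∀ t,
      ξ t i = ξ t ⟨0, hd⟩ *
        (ξ 0 i / ξ 0 ⟨0, hd⟩
          + ∫ s in (0:ℝ)..t, ∑ j ∈ Finset.Iio i, A s i j * ξ s j / ξ s ⟨0, hd⟩)) := by
  set i₀ : Fin d := ⟨0, hd⟩
  have hsolve (i : Fin d) (t : ℝ) : ξ t i = exp t *
      (ξ 0 i + ∫ s in (0 : ℝ)..t, exp (-s) * ∑ j ∈ Finset.Iio i, A s i j * ξ s j) := by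
    refine eq_exp_mul_add_integral_of_hasDerivAt_self_add
      (f := fun t => ξ t i) (g := fun s => ∑ j ∈ Finset.Iio i, A s i j * ξ s j)
      (continuous_finsetSum _ fun j _ => (hA.matrix_elem i j).mul (hξ j).continuous)
      (fun s => ?_) t
    have hsplit : ∑ j ∈ Finset.Iic i, A s i j * ξ s j
        = ξ s i + ∑ j ∈ Finset.Iio i, A s i j * ξ s j := by
      rw [Finset.Iic_eq_cons_Iio, Finset.sum_cons, hdiag, one_mul]
    rw [← hsplit, ← hode]
    exact (hξ i s).hasDerivAt
  have hfirst (t : ℝ) : ξ t i₀ = ξ 0 i₀ * exp t := by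
    have hempty : Finset.Iio i₀ = ∅ :=
      Finset.Iio_eq_empty.mpr fun j _ => Fin.le_def.mpr (Nat.zero_le j)
    rw [hsolve, hempty]
    simp [mul_comm]
  refine ⟨hfirst, fun i _ t => ?_⟩
  have hintegrand (s : ℝ) : ∑ j ∈ Finset.Iio i, A s i j * ξ s j / ξ s i₀
      = (exp (-s) * ∑ j ∈ Finset.Iio i, A s i j * ξ s j) / ξ 0 i₀ := by
    rw [← Finset.sum_div, hfirst, exp_neg]
    field_simp
  rw [integral_congr fun s _ => hintegrand s, integral_div, hsolve i t, hfirst t]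
  field_simp

/-- Unit lower triangular Piccard-Vessiot systems are solved by iterated quadratures. -/
theorem stmt_4 (d : ℕ) (hd : 0 < d) (A : ℝ → Matrix (Fin d) (Fin d) ℝ)
    (hA : Continuous A)
    (hlow : ∀ t (i j : Fin d), i < j → A t i j = 0)
    (hdiag : ∀ t (i : Fin d), A t i i = 1)
    (ξ : ℝ → Fin d → ℝ)
    (hξ : ∀ i : Fin d, Differentiable ℝ (fun t => ξ t i))
    (hode : ∀ (i : Fin d) (t : ℝ),
      deriv (fun t => ξ t i) t = ∑ j ∈ Finset.Iic i, A t i j * ξ t j)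
    (h0 : ξ 0 ⟨0, hd⟩ ≠ 0) :
    (∀ t, ξ t ⟨0, hd⟩ = ξ 0 ⟨0, hd⟩ * Real.exp t) ∧
    (∀ i : Fin d, 1 ≤ (i : ℕ) → ∀ t,
      ξ t i = ξ t ⟨0, hd⟩ *
        (ξ 0 i / ξ 0 ⟨0, hd⟩
          + ∫ s in (0:ℝ)..t, ∑ j ∈ Finset.Iio i, A s i j * ξ s j / ξ s ⟨0, hd⟩)) :=
  stmt_4_general d hd A hA hdiag ξ hξ hode h0
end

section
/- Let d ≥ 1, let A : ℝ → Matrix (Fin d) (Fin d) ℝ be continuous with A(t) lower triangular (Aᵢⱼ(t) = 0 for j > i) for all t, set cᵢ(t) = ∫₀ᵗ Aᵢᵢ(s) ds for each index i, and let ξ : ℝ → Fin d → ℝ be differentiable with ξᵢ'(t) = Σ_{j ≤ i} Aᵢⱼ(t)·ξⱼ(t) for all i and t, and with ξ₀(0) ≠ 0 (components indexed from 0). Then ξ₀(t) = ξ₀(0)·exp(c₀(t)) for all t, and for every index i ≥ 1 and all t, ξᵢ(t) = ξ₀(t)·exp(cᵢ(t) − c₀(t))·( ξᵢ(0)/ξ₀(0)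 + ∫₀ᵗ ( Σ_{j < i} Aᵢⱼ(s)·ξⱼ(s)/ξ₀(s) )·exp(c₀(s) − cᵢ(s)) ds ). Hence every component of ξ is obtained from the entries of A by iterated quadratures (integrals and exponentials of integrals). -/
/-!
Row `i` of the system is the scalar equation `y' = a y + b` with `a = A i i` and forcing term
`b = ∑_{j<i} A i j ξ j`, which involves only earlier components. The integrating factor
`exp (-c i)` turns it into `(y exp (-c i))' = b exp (-c i)`, solved by one integral.
For the first component the forcing term vanishes, so it is an exponential of an integral,
nowhere zero as soon as it is nonzero at `0`; dividing by it gives the formula for `i ≥ 1`.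
-/

open Finset Real

theorem integral_mul_exp_neg_eq_sub_of_hasDerivAt {a b y C : ℝ → ℝ}
    (hC : ∀ t, HasDerivAt C (a t) t) (hy : ∀ t, HasDerivAt y (a t * y t + b t) t)
    (hb : Continuous b) (t₀ t : ℝ) :
    ∫ s in t₀..t, b s * exp (-C s) = y t * exp (-C t) - y t₀ * exp (-C t₀) := by
  have hC_cont : Continuous C := continuous_iff_continuousAt.2 fun t => (hC t).continuousAt
  refine intervalIntegral.integral_eq_sub_of_hasDerivAt (f := fun s => y s * exp (-C s))
    (fun s _ => ?_) (Continuous.intervalIntegrable (by fun_prop) _ _)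
  exact ((hy s).mul (hC s).neg.exp).congr_deriv (by rw [Pi.neg_apply]; ring)

theorem stmt_7_general (d : ℕ) (hd : 0 < d) (A : ℝ → Matrix (Fin d) (Fin d) ℝ)
    (hA : Continuous A)
    (c : Fin d → ℝ → ℝ)
    (hc : ∀ (i : Fin d) (t : ℝ), c i t = ∫ s in (0:ℝ)..t, A s i i)
    (ξ : ℝ → Fin d → ℝ)
    (hξ : ∀ i : Fin d, Differentiable ℝ (fun t => ξ t i))
    (hode : ∀ (i : Fin d) (t : ℝ),
      deriv (fun t => ξ t i) t = ∑ j ∈ Finset.Iic i, A t i j * ξ t j)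
    (h0 : ξ 0 ⟨0, hd⟩ ≠ 0) :
    (∀ t, ξ t ⟨0, hd⟩ = ξ 0 ⟨0, hd⟩ * Real.exp (c ⟨0, hd⟩ t)) ∧
    (∀ i : Fin d, 1 ≤ (i : ℕ) → ∀ t,
      ξ t i = ξ t ⟨0, hd⟩ * Real.exp (c i t - c ⟨0, hd⟩ t) *
        (ξ 0 i / ξ 0 ⟨0, hd⟩
          + ∫ s in (0:ℝ)..t,
              (∑ j ∈ Finset.Iio i, A s i j * ξ s j / ξ s ⟨0, hd⟩)
                * Real.exp (c ⟨0, hd⟩ s - c i s))) := by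
  set i₀ : Fin d := ⟨0, hd⟩
  have hc_deriv (i : Fin d) (t : ℝ) : HasDerivAt (c i) (A t i i) t := by
    rw [funext (hc i)]
    exact ((hA.matrix_elem i i).integral_hasStrictDerivAt 0 t).hasDerivAt
  have hc_zero (i : Fin d) : c i 0 = 0 := by rw [hc, intervalIntegral.integral_same]
  have hξ_deriv (i : Fin d) (t : ℝ) :
      HasDerivAt (fun t => ξ t i) (A t i i * ξ t i + ∑ j ∈ Iio i, A t i j * ξ t j) t := by
    have h := hode i t
    rw [← Iio_insert, sum_insert notMem_Iio_self] at h
    exact h ▸ (hξ i t).hasDerivAt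
  have hsolve (i : Fin d) (t : ℝ) :
      ∫ s in (0:ℝ)..t, (∑ j ∈ Iio i, A s i j * ξ s j) * exp (-c i s)
        = ξ t i * exp (-c i t) - ξ 0 i := by
    rw [integral_mul_exp_neg_eq_sub_of_hasDerivAt (hc_deriv i) (hξ_deriv i)
      (continuous_finsetSum _ fun j _ => (hA.matrix_elem i j).mul (hξ j).continuous),
      hc_zero, neg_zero, exp_zero, mul_one]
  have hξ₀ (t : ℝ) : ξ t i₀ = ξ 0 i₀ * exp (c i₀ t) := by
    have h := hsolve i₀ t
    rw [(Iio_eq_empty (a := i₀)).2 fun j _ => Nat.zero_le j] at h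
    simp only [sum_empty, zero_mul, intervalIntegral.integral_zero] at h
    rw [eq_comm, sub_eq_zero, exp_neg, ← div_eq_mul_inv, div_eq_iff (exp_pos _).ne'] at h
    exact h
  refine ⟨hξ₀, fun i _ t => ?_⟩
  have hintegrand (s : ℝ) :
      (∑ j ∈ Iio i, A s i j * ξ s j / ξ s i₀) * exp (c i₀ s - c i s)
        = (ξ 0 i₀)⁻¹ * ((∑ j ∈ Iio i, A s i j * ξ s j) * exp (-c i s)) := by
    rw [← sum_div, hξ₀ s, exp_sub, exp_neg]
    field_simp
  rw [intervalIntegral.integral_congr fun s _ => hintegrand s,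
    intervalIntegral.integral_const_mul, hsolve, hξ₀ t, exp_sub, exp_neg]
  field_simp
  ring

/-- Lower triangular Piccard-Vessiot systems are solved by iterated quadratures. -/
theorem stmt_7 (d : ℕ) (hd : 0 < d) (A : ℝ → Matrix (Fin d) (Fin d) ℝ)
    (hA : Continuous A)
    (hlow : ∀ t (i j : Fin d), i < j → A t i j = 0)
    (c : Fin d → ℝ → ℝ)
    (hc : ∀ (i : Fin d) (t : ℝ), c i t = ∫ s in (0:ℝ)..t, A s i i)
    (ξ : ℝ → Fin d → ℝ)
    (hξ : ∀ i : Fin d, Differentiable ℝ (fun t => ξ t i))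
    (hode : ∀ (i : Fin d) (t : ℝ),
      deriv (fun t => ξ t i) t = ∑ j ∈ Finset.Iic i, A t i j * ξ t j)
    (h0 : ξ 0 ⟨0, hd⟩ ≠ 0) :
    (∀ t, ξ t ⟨0, hd⟩ = ξ 0 ⟨0, hd⟩ * Real.exp (c ⟨0, hd⟩ t)) ∧
    (∀ i : Fin d, 1 ≤ (i : ℕ) → ∀ t,
      ξ t i = ξ t ⟨0, hd⟩ * Real.exp (c i t - c ⟨0, hd⟩ t) *
        (ξ 0 i / ξ 0 ⟨0, hd⟩
          + ∫ s in (0:ℝ)..t,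
              (∑ j ∈ Finset.Iio i, A s i j * ξ s j / ξ s ⟨0, hd⟩)
                * Real.exp (c ⟨0, hd⟩ s - c i s))) :=
  stmt_7_general d hd A hA c hc ξ hξ hode h0
end

section
/- Let a₁₁, a₂₁, a₂₂ : ℝ → ℝ be continuous, set c₁(t) = ∫₀ᵗ a₁₁(s) ds and c₂(t) = ∫₀ᵗ a₂₂(s) ds, and let ξ₁, ξ₂ : ℝ → ℝ be differentiable with ξ₁'(t) = a₁₁(t)·ξ₁(t), ξ₂'(t) = a₂₁(t)·ξ₁(t) + a₂₂(t)·ξ₂(t) for all t, and ξ₁(0) ≠ 0. Then for all t, ξ₂(t) = ξ₁(t)·exp(c₂(t) − c₁(t))·( ξ₂(0)/ξ₁(0) + ∫₀ᵗ a₂₁(s)·exp(c₁(s) − c₂(s)) ds ). -/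
/-!
Multiplying `y' = a y + b` by the integrating factor `exp (-c)`, where `c' = a`, turns it into
`(y · exp (-c))' = b · exp (-c)`, which is integrated directly. Applied with `b = 0` this gives
`ξ₁ = ξ₁(0) · exp c₁`, and then, to the second equation with `b = a₂₁ ξ₁`, the formula for `ξ₂`.
-/

open Real intervalIntegral

theorem mul_exp_neg_eq_add_integral_of_hasDerivAt {a b c y : ℝ → ℝ} (hb : Continuous b)
    (hc : ∀ t, HasDerivAt c (a t) t) (hy : ∀ t, HasDerivAt y (a t * y t + b t) t) (t₀ t : ℝ) :
    y t * exp (-c t) = y t₀ * exp (-c t₀) + ∫ s in t₀..t, b s * exp (-c s) := by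
  have hderiv : ∀ s, HasDerivAt (fun s => y s * exp (-c s)) (b s * exp (-c s)) s := fun s =>
    ((hy s).mul (hc s).neg.exp).congr_deriv (by rw [Pi.neg_apply]; ring)
  have hc_cont : Continuous c := continuous_iff_continuousAt.2 fun s => (hc s).continuousAt
  rw [integral_eq_sub_of_hasDerivAt (fun s _ => hderiv s)
    ((hb.mul hc_cont.neg.rexp).intervalIntegrable _ _)]
  ring

theorem eq_mul_exp_sub_of_hasDerivAt {a c y : ℝ → ℝ} (hc : ∀ t, HasDerivAt c (a t) t)
    (hy : ∀ t, HasDerivAt y (a t * y t) t) (t₀ t : ℝ) :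
    y t = y t₀ * exp (c t - c t₀) := by
  have h := mul_exp_neg_eq_add_integral_of_hasDerivAt (y := y) (b := fun _ => 0)
    continuous_const hc (fun s => by simpa using hy s) t₀ t
  simp only [zero_mul, integral_zero, add_zero] at h
  rw [exp_neg, exp_neg] at h
  rw [exp_sub]
  field_simp at h ⊢
  linear_combination h

theorem hasDerivAt_integral_of_continuous {f F : ℝ → ℝ} {t₀ : ℝ} (hf : Continuous f)
    (hF : ∀ t, F t = ∫ s in t₀..t, f s) (t : ℝ) : HasDerivAt F (f t) t := by
  rw [funext hF]
  exact (hf.integral_hasStrictDerivAt t₀ t).hasDerivAt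

/-- Base step for the lower triangular case, solved by quadratures. -/
theorem stmt_8 (a₁₁ a₂₁ a₂₂ c₁ c₂ ξ₁ ξ₂ : ℝ → ℝ)
    (ha₁₁ : Continuous a₁₁) (ha₂₁ : Continuous a₂₁) (ha₂₂ : Continuous a₂₂)
    (hc₁ : ∀ t, c₁ t = ∫ s in (0:ℝ)..t, a₁₁ s)
    (hc₂ : ∀ t, c₂ t = ∫ s in (0:ℝ)..t, a₂₂ s)
    (hξ₁ : Differentiable ℝ ξ₁) (hξ₂ : Differentiable ℝ ξ₂)
    (hode₁ : ∀ t, deriv ξ₁ t = a₁₁ t * ξ₁ t)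
    (hode₂ : ∀ t, deriv ξ₂ t = a₂₁ t * ξ₁ t + a₂₂ t * ξ₂ t)
    (h0 : ξ₁ 0 ≠ 0) :
    ∀ t, ξ₂ t = ξ₁ t * Real.exp (c₂ t - c₁ t) *
      (ξ₂ 0 / ξ₁ 0 + ∫ s in (0:ℝ)..t, a₂₁ s * Real.exp (c₁ s - c₂ s)) := by
  intro t
  have hc₁0 : c₁ 0 = 0 := by simp [hc₁]
  have hc₂0 : c₂ 0 = 0 := by simp [hc₂]
  have hξ₁_eq : ∀ s, ξ₁ s = ξ₁ 0 * exp (c₁ s) := fun s => by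
    simpa [hc₁0] using eq_mul_exp_sub_of_hasDerivAt (hasDerivAt_integral_of_continuous ha₁₁ hc₁)
      (fun s => hode₁ s ▸ (hξ₁ s).hasDerivAt) 0 s
  have hξ₂_eq := mul_exp_neg_eq_add_integral_of_hasDerivAt (b := fun s => a₂₁ s * ξ₁ s)
    (ha₂₁.mul hξ₁.continuous) (hasDerivAt_integral_of_continuous ha₂₂ hc₂)
    (fun s => (hode₂ s).trans (add_comm _ _) ▸ (hξ₂ s).hasDerivAt) 0 t
  have hintegral : ∫ s in (0:ℝ)..t, a₂₁ s * ξ₁ s * exp (-c₂ s)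
      = ξ₁ 0 * ∫ s in (0:ℝ)..t, a₂₁ s * exp (c₁ s - c₂ s) := by
    rw [← integral_const_mul]
    refine integral_congr fun s _ => ?_
    simp only [hξ₁_eq s, sub_eq_add_neg, exp_add]
    ring
  rw [hintegral, hc₂0, neg_zero, exp_zero, mul_one, exp_neg] at hξ₂_eq
  rw [hξ₁_eq t, exp_sub]
  field_simp at hξ₂_eq ⊢
  linear_combination hξ₂_eq
end

section
/- Let v₁, w₁, v₂, w₂, ψ : ℝ → ℝ be differentiable and u₁, u₂ : ℝ → ℝ, satisfying for all t: v₁' = u₁, w₁' = u₂, v₂' = u₁·cos ψ − u₂·sin ψ, w₂' = −(1/cos v₂)·(u₁·sin ψ + u₂·cos ψ), ψ' = tan(v₂)·(u₁·sin ψ + u₂·cos ψ), and suppose cos(ψ(t)/2) ≠ 0 and cos(v₂(t)/2) ≠ 0 for all t. Define σ(t) = tan(ψ(t)/2) and ξ(t) = tan(v₂(t)/2). Then for all t, ξ'(t) = ((1 + ξ(t)²)/(2·(1 + σ(t)²)))·( (1 − σ(t)²)·u₁(t) − 2·σ(t)·u₂(t) ). -/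
/-!
Since `tan' = 1 + tan²`, the chain rule gives `ξ' = (1 + ξ²) / 2 · v₂'`; the tangent half-angle
substitution `cos ψ = (1 - σ²) / (1 + σ²)`, `sin ψ = 2σ / (1 + σ²)` then turns the equation for
`v₂'` into the rational one.
-/

open Real

theorem Real.hasDerivAt_tan_half {f : ℝ → ℝ} {f' t : ℝ} (hf : HasDerivAt f f' t)
    (hcos : cos (f t / 2) ≠ 0) :
    HasDerivAt (fun s => tan (f s / 2)) ((1 + tan (f t / 2) ^ 2) / 2 * f') t := by
  have hderiv := (hasDerivAt_tan hcos).comp t (hf.div_const 2)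
  rwa [one_div, ← inv_one_add_tan_sq hcos, inv_inv, ← mul_div_assoc, mul_div_right_comm]
    at hderiv

theorem Real.cos_ne_neg_one_of_cos_half_ne_zero {x : ℝ} (h : cos (x / 2) ≠ 0) :
    cos x ≠ -1 := by
  rw [← mul_div_cancel₀ x two_ne_zero, cos_two_mul]
  intro hx
  exact h (pow_eq_zero_iff two_ne_zero |>.mp (by linarith))

theorem stmt_11_general (v₂ ψ u₁ u₂ : ℝ → ℝ)
    (hv₂ : Differentiable ℝ v₂)
    (hode₃ : ∀ t, deriv v₂ t = u₁ t * Real.cos (ψ t) - u₂ t * Real.sin (ψ t))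
    (hψhalf : ∀ t, Real.cos (ψ t / 2) ≠ 0)
    (hv₂half : ∀ t, Real.cos (v₂ t / 2) ≠ 0)
    (σ ξ : ℝ → ℝ)
    (hσ : ∀ t, σ t = Real.tan (ψ t / 2))
    (hξ : ∀ t, ξ t = Real.tan (v₂ t / 2)) :
    ∀ t, deriv ξ t
      = ((1 + (ξ t) ^ 2) / (2 * (1 + (σ t) ^ 2)))
          * ((1 - (σ t) ^ 2) * u₁ t - 2 * σ t * u₂ t) := by
  intro t
  have hξ_deriv : HasDerivAt ξ ((1 + ξ t ^ 2) / 2 * deriv v₂ t) t := by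
    rw [funext hξ]
    exact hasDerivAt_tan_half (hv₂ t).hasDerivAt (hv₂half t)
  have hcosψ := cos_eq_two_mul_tan_half_div_one_sub_tan_half_sq _
    (cos_ne_neg_one_of_cos_half_ne_zero (hψhalf t))
  rw [hξ_deriv.deriv, hode₃, hcosψ, sin_eq_two_mul_tan_half_div_one_add_tan_half_sq, ← hσ]
  field_simp

/-- Rationalized equation for ξ = tan(v₂/2) in the plate-ball system. -/
theorem stmt_11 (v₁ w₁ v₂ w₂ ψ u₁ u₂ : ℝ → ℝ)
    (hv₁ : Differentiable ℝ v₁) (hw₁ : Differentiable ℝ w₁)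
    (hv₂ : Differentiable ℝ v₂) (hw₂ : Differentiable ℝ w₂)
    (hψ : Differentiable ℝ ψ)
    (hode₁ : ∀ t, deriv v₁ t = u₁ t)
    (hode₂ : ∀ t, deriv w₁ t = u₂ t)
    (hode₃ : ∀ t, deriv v₂ t = u₁ t * Real.cos (ψ t) - u₂ t * Real.sin (ψ t))
    (hode₄ : ∀ t, deriv w₂ t
      = -(1 / Real.cos (v₂ t)) * (u₁ t * Real.sin (ψ t) + u₂ t * Real.cos (ψ t)))
    (hode₅ : ∀ t, deriv ψ t
      = Real.tan (v₂ t) * (u₁ t * Real.sin (ψ t) + u₂ t * Real.cos (ψ t)))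
    (hψhalf : ∀ t, Real.cos (ψ t / 2) ≠ 0)
    (hv₂half : ∀ t, Real.cos (v₂ t / 2) ≠ 0)
    (σ ξ : ℝ → ℝ)
    (hσ : ∀ t, σ t = Real.tan (ψ t / 2))
    (hξ : ∀ t, ξ t = Real.tan (v₂ t / 2)) :
    ∀ t, deriv ξ t
      = ((1 + (ξ t) ^ 2) / (2 * (1 + (σ t) ^ 2)))
          * ((1 - (σ t) ^ 2) * u₁ t - 2 * σ t * u₂ t) :=
  stmt_11_general v₂ ψ u₁ u₂ hv₂ hode₃ hψhalf hv₂half σ ξ hσ hξ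
end

section
/- Let v₁, w₁, v₂, w₂, ψ : ℝ → ℝ be differentiable and u₁, u₂ : ℝ → ℝ, satisfying for all t: v₁' = u₁, w₁' = u₂, v₂' = u₁·cos ψ − u₂·sin ψ, w₂' = −(1/cos v₂)·(u₁·sin ψ + u₂·cos ψ), ψ' = tan(v₂)·(u₁·sin ψ + u₂·cos ψ), and suppose cos(ψ(t)/2) ≠ 0, cos(v₂(t)/2) ≠ 0 and cos(v₂(t)) ≠ 0 for all t. Define σ(t) = tan(ψ(t)/2) and ξ(t) = tan(v₂(t)/2). Then for all t, σ'(t) = (ξ(t)/(1 − ξ(t)²))·( 2·σ(t)·u₁(t) + (1 − σ(t)²)·u₂(t) ). -/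
/-!
With σ = tan(ψ/2) one has σ' = (1 + σ²) ψ'/2, and the half-angle substitution gives
sin ψ = 2σ/(1 + σ²), cos ψ = (1 - σ²)/(1 + σ²), tan v₂ = 2ξ/(1 - ξ²); inserting these into
the equation for ψ' the factor 1 + σ² cancels.
-/

open Real

theorem Real.cos_eq_one_sub_tan_half_sq_div_one_add_tan_half_sq {x : ℝ} (h : cos (x / 2) ≠ 0) :
    cos x = (1 - tan (x / 2) ^ 2) / (1 + tan (x / 2) ^ 2) := by
  refine cos_eq_two_mul_tan_half_div_one_sub_tan_half_sq x fun hx ↦ h ?_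
  have : 2 * cos (x / 2) ^ 2 - 1 = -1 := by rwa [← cos_two_mul, mul_div_cancel₀ x two_ne_zero]
  simpa using this

theorem hasDerivAt_tan_comp_half {f : ℝ → ℝ} {f' x : ℝ} (hf : HasDerivAt f f' x)
    (h : cos (f x / 2) ≠ 0) :
    HasDerivAt (fun t ↦ tan (f t / 2)) ((1 + tan (f x / 2) ^ 2) * f' / 2) x := by
  have := (hasDerivAt_tan h).comp x (hf.div_const 2)
  rwa [one_div, ← inv_one_add_tan_sq h, inv_inv, ← mul_div_assoc] at this

theorem stmt_12_general (v₂ ψ u₁ u₂ : ℝ → ℝ)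
    (hψ : Differentiable ℝ ψ)
    (hode₅ : ∀ t, deriv ψ t
      = Real.tan (v₂ t) * (u₁ t * Real.sin (ψ t) + u₂ t * Real.cos (ψ t)))
    (hψhalf : ∀ t, Real.cos (ψ t / 2) ≠ 0)
    (σ ξ : ℝ → ℝ)
    (hσ : ∀ t, σ t = Real.tan (ψ t / 2))
    (hξ : ∀ t, ξ t = Real.tan (v₂ t / 2)) :
    ∀ t, deriv σ t
      = (ξ t / (1 - (ξ t) ^ 2))
          * (2 * σ t * u₁ t + (1 - (σ t) ^ 2) * u₂ t) := by
  intro t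
  have hσ' : HasDerivAt σ ((1 + σ t ^ 2) * deriv ψ t / 2) t := by
    rw [funext hσ]
    exact hasDerivAt_tan_comp_half (hψ t).hasDerivAt (hψhalf t)
  have hsq : 1 + σ t ^ 2 ≠ 0 := by positivity
  rw [hσ'.deriv, hode₅, tan_eq_one_sub_tan_half_sq_div_one_add_tan_half_sq (v₂ t),
    sin_eq_two_mul_tan_half_div_one_add_tan_half_sq (ψ t),
    cos_eq_one_sub_tan_half_sq_div_one_add_tan_half_sq (hψhalf t), ← hξ, ← hσ, mul_div_assoc]
  field_simp

/-- Rationalized equation for σ = tan(ψ/2) in the plate-ball system. -/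
theorem stmt_12 (v₁ w₁ v₂ w₂ ψ u₁ u₂ : ℝ → ℝ)
    (hv₁ : Differentiable ℝ v₁) (hw₁ : Differentiable ℝ w₁)
    (hv₂ : Differentiable ℝ v₂) (hw₂ : Differentiable ℝ w₂)
    (hψ : Differentiable ℝ ψ)
    (hode₁ : ∀ t, deriv v₁ t = u₁ t)
    (hode₂ : ∀ t, deriv w₁ t = u₂ t)
    (hode₃ : ∀ t, deriv v₂ t = u₁ t * Real.cos (ψ t) - u₂ t * Real.sin (ψ t))
    (hode₄ : ∀ t, deriv w₂ t
      = -(1 / Real.cos (v₂ t)) * (u₁ t * Real.sin (ψ t) + u₂ t * Real.cos (ψ t)))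
    (hode₅ : ∀ t, deriv ψ t
      = Real.tan (v₂ t) * (u₁ t * Real.sin (ψ t) + u₂ t * Real.cos (ψ t)))
    (hψhalf : ∀ t, Real.cos (ψ t / 2) ≠ 0)
    (hv₂half : ∀ t, Real.cos (v₂ t / 2) ≠ 0)
    (hv₂cos : ∀ t, Real.cos (v₂ t) ≠ 0)
    (σ ξ : ℝ → ℝ)
    (hσ : ∀ t, σ t = Real.tan (ψ t / 2))
    (hξ : ∀ t, ξ t = Real.tan (v₂ t / 2)) :
    ∀ t, deriv σ t
      = (ξ t / (1 - (ξ t) ^ 2))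
          * (2 * σ t * u₁ t + (1 - (σ t) ^ 2) * u₂ t) :=
  stmt_12_general v₂ ψ u₁ u₂ hψ hode₅ hψhalf σ ξ hσ hξ
end
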